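/- arXiv:2506.11628 — 4 statements merged into one kernel-verified Lean document; each statement's English description precedes it below -/
import Mathlib

section
/- Let s ≥ 2, v ≥ 1, and ℓ_b = (2v−1)(s−1) + 2v. If integers i, i' with 1 ≤ i, i' ≤ s and j, k satisfy (1/2)ℓ_b < j ≤ ℓ_b, 2 ≤ k ≤ ℓ_b, and (i'−1)ℓ_b ≤ (i−1)ℓ_b + j − k < (i'−1/2)ℓ_b, then i = i'. -/
/-! Put `x = (i - 1)ℓ_b + j - k`. The bounds on `j` and `k` give `-ℓ_b/2 < j - k < ℓ_b`, so
`(i - 3/2)ℓ_b < x < iℓ_b`, while by hypothesis `(i' - 1)ℓ_b ≤ x < (i' - 1/2)ℓ_b`. As `ℓ_b > 0`,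
comparing the two windows in multiples of `ℓ_b` forces `i' ≤ i` and `i ≤ i'`. -/

theorem le_of_mul_le_of_lt_add_one_mul {L x a b : ℤ} (hL : 0 < L) (ha : a * L ≤ x)
    (hb : x < (b + 1) * L) : a ≤ b :=
  Int.lt_add_one_iff.mp (lt_of_mul_lt_mul_right (ha.trans_lt hb) hL.le)

theorem gaps_same_bucket_general (i i' j k lb : ℤ)
    (hj1 : lb < 2*j) (hj2 : j ≤ lb)
    (hk1 : 2 ≤ k) (hk2 : k ≤ lb)
    (h1 : (i' - 1) * lb ≤ (i - 1) * lb + j - k)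
    (h2 : 2 * ((i - 1) * lb + j - k) < (2*i' - 1) * lb) :
    i = i' := by
  have hlb : 0 < lb := by linarith
  have hi'_le : i' - 1 ≤ i - 1 := le_of_mul_le_of_lt_add_one_mul hlb h1 (by linarith)
  have hi_le : 2 * i - 3 ≤ 2 * i' - 2 :=
    le_of_mul_le_of_lt_add_one_mul (x := 2 * ((i - 1) * lb + j - k)) hlb (by linarith)
      (by linarith)
  omega

/-- The key inequality in Lemma 3: with `s ≥ 2`, `v ≥ 1`, `ℓ_b = (2v−1)(s−1)+2v`,
if `1 ≤ i, i' ≤ s`, `(1/2)ℓ_b < j ≤ ℓ_b`, `2 ≤ k ≤ ℓ_b`, and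
`(i'−1)ℓ_b ≤ (i−1)ℓ_b + j − k < (i'−1/2)ℓ_b`, then `i = i'`. -/
theorem gaps_same_bucket (s v i i' j k lb : ℤ) (hs : 2 ≤ s) (hv : 1 ≤ v)
    (hlb : lb = (2*v - 1) * (s - 1) + 2*v)
    (hi1 : 1 ≤ i) (hi2 : i ≤ s) (hi'1 : 1 ≤ i') (hi'2 : i' ≤ s)
    (hj1 : lb < 2*j) (hj2 : j ≤ lb)
    (hk1 : 2 ≤ k) (hk2 : k ≤ lb)
    (h1 : (i' - 1) * lb ≤ (i - 1) * lb + j - k)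
    (h2 : 2 * ((i - 1) * lb + j - k) < (2*i' - 1) * lb) :
    i = i' :=
  gaps_same_bucket_general i i' j k lb hj1 hj2 hk1 hk2 h1 h2
end

section
/- Given a finite set W of Wang tiles with colors in {1,…,k}, define for the i-th Wang tile (with colors a,b,c,d on left, right, top, bottom) an A tile with edge colors (upper-left, upper-right, lower-left, lower-right) = (0, c, a, k+i) and a B tile with edge colors (k+i, b, d, 0). Then W admits a Wang tiling of the plane if and only if the resulting AB instance admits an AB tiling. -/
/-- A Wang tile, with colors on its left, right, top and bottom edges. -/
structure WangTile where
  left : ℕ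
  right : ℕ
  top : ℕ
  bottom : ℕ

/-- A Wang tiling of the plane: an assignment of tiles to `ℤ²` (no rotations) such
that adjacent tiles share colors on common edges. -/
def IsWangTiling {n : ℕ} (W : Fin n → WangTile) (f : ℤ × ℤ → Fin n) : Prop :=
  ∀ x y : ℤ,
    (W (f (x, y))).right = (W (f (x + 1, y))).left ∧
    (W (f (x, y))).top = (W (f (x, y + 1))).bottom

/-- An AB tile: a `1×2` vertical rectangle whose two long sides each carry a top and
a bottom color (upper-left, upper-right, lower-left, lower-right). -/
structure ABTile where
  ul : ℕ
  ur : ℕ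
  ll : ℕ
  lr : ℕ

/-- An AB tiling: `a x y` is the index of the `A` tile with lower-left corner
`(2x, 2y)` and `b x y` is the index of the `B` tile with lower-left corner
`(2x+1, 2y+1)`; these tiles cover the plane, and colors must match along every
shared vertical unit edge. -/
def IsABTiling {n : ℕ} (A B : Fin n → ABTile) (a b : ℤ × ℤ → Fin n) : Prop :=
  ∀ x y : ℤ,
    (A (a (x, y))).ur = (B (b (x, y))).ll ∧
    (A (a (x, y))).lr = (B (b (x, y - 1))).ul ∧
    (B (b (x, y))).ur = (A (a (x + 1, y + 1))).ll ∧
    (B (b (x, y))).lr = (A (a (x + 1, y))).ul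

/-!
The colour `k + 1 + i` on the lower-right side of the `A` tile `i` and on the upper-left side
of the `B` tile `i` identifies the tile, so in an AB tiling every `B` tile repeats the `A` tile
just above it. Gluing the `A` tile at `(x, y)` to the `B` tile above it yields a square whose
right, left, top and bottom colours are those of the `i`-th Wang tile, and the remaining edge
conditions of the AB tiling are exactly the Wang matching conditions.
-/

section WangToAB

variable {n : ℕ} (k : ℕ) (W : Fin n → WangTile)

def wangA (i : Fin n) : ABTile := ⟨0, (W i).top, (W i).left, k + 1 + i.val⟩

def wangB (i : Fin n) : ABTile := ⟨k + 1 + i.val, (W i).right, (W i).bottom, 0⟩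

def shiftUp (f : ℤ × ℤ → Fin n) : ℤ × ℤ → Fin n := fun p => f (p.1, p.2 + 1)

variable {k W}

theorem IsABTiling.eq_shiftUp {a b : ℤ × ℤ → Fin n}
    (h : IsABTiling (wangA k W) (wangB k W) a b) : b = shiftUp a := by
  funext ⟨x, y⟩
  have hlabel := (h x (y + 1)).2.1
  simp only [wangA, wangB, add_sub_cancel_right] at hlabel
  exact Fin.ext (by simp only [shiftUp]; omega)

theorem isABTiling_shiftUp_iff {f : ℤ × ℤ → Fin n} :
    IsABTiling (wangA k W) (wangB k W) f (shiftUp f) ↔ IsWangTiling W f := by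
  simp only [IsABTiling, IsWangTiling, wangA, wangB, shiftUp, sub_add_cancel, and_true,
    true_and]
  refine ⟨fun h x y => ⟨?_, (h x y).1⟩, fun h x y => ⟨(h x y).2, (h x (y + 1)).1⟩⟩
  simpa only [sub_add_cancel] using (h x (y - 1)).2

end WangToAB

theorem wang_tiling_iff_ab_tiling_general (n k : ℕ) (W : Fin n → WangTile) :
    (∃ f, IsWangTiling W f) ↔
      ∃ a b, IsABTiling
        (fun i => ⟨0, (W i).top, (W i).left, k + 1 + i.val⟩)
        (fun i => ⟨k + 1 + i.val, (W i).right, (W i).bottom, 0⟩) a b := by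
  constructor
  · rintro ⟨f, hf⟩
    exact ⟨f, shiftUp f, isABTiling_shiftUp_iff.2 hf⟩
  · rintro ⟨a, b, h⟩
    obtain rfl : b = shiftUp a := IsABTiling.eq_shiftUp (k := k) (W := W) h
    exact ⟨a, isABTiling_shiftUp_iff.1 h⟩

/-- Lemma 2 (AB tiling simulates Wang tiling): given Wang tiles with colors in
`{1,…,k}`, build for the `i`-th Wang tile (colors `a,b,c,d` on left, right, top,
bottom) an `A` tile with colors `(0, c, a, k+i)` and a `B` tile with colors
`(k+i, b, d, 0)`. Then the Wang tiles tile the plane iff the AB instance does. -/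
theorem wang_tiling_iff_ab_tiling (n k : ℕ) (W : Fin n → WangTile)
    (hcolors : ∀ i, (W i).left ∈ Set.Icc 1 k ∧ (W i).right ∈ Set.Icc 1 k ∧
      (W i).top ∈ Set.Icc 1 k ∧ (W i).bottom ∈ Set.Icc 1 k) :
    (∃ f, IsWangTiling W f) ↔
      ∃ a b, IsABTiling
        (fun i => ⟨0, (W i).top, (W i).left, k + 1 + i.val⟩)
        (fun i => ⟨k + 1 + i.val, (W i).right, (W i).bottom, 0⟩) a b :=
  wang_tiling_iff_ab_tiling_general n k W
end

section
/- The AB tiling problem is undecidable: there is no algorithm that, given finite sets A and B of colored 1×2 tiles with |A| = |B|, decides whether they admit an AB tiling of the plane. -/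
/-- A tile is encoded as a 4-tuple of colors. For a Wang tile the components are the
left, right, top and bottom colors; for an AB tile they are the upper-left,
upper-right, lower-left and lower-right colors. -/
abbrev Tile := ℕ × ℕ × ℕ × ℕ

/-- The finite list `L` of Wang tiles admits a Wang tiling of the plane: tiles are
assigned to `ℤ²` (no rotations) so that adjacent tiles share colors on common
edges. -/
def WangSolvable (L : List Tile) : Prop :=
  ∃ f : ℤ × ℤ → Fin L.length, ∀ x y : ℤ,
    (L.get (f (x, y))).2.1 = (L.get (f (x + 1, y))).1 ∧
    (L.get (f (x, y))).2.2.1 = (L.get (f (x, y + 1))).2.2.2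

/-- The AB instance `(A, B)` (with `|A| = |B|`) admits an AB tiling: `a x y` indexes
the `A` tile with lower-left corner `(2x, 2y)` and `b x y` indexes the `B` tile with
lower-left corner `(2x+1, 2y+1)`; colors (upper-left, upper-right, lower-left,
lower-right) must match along every shared vertical unit edge. -/
def ABSolvable (A B : List Tile) : Prop :=
  ∃ (a : ℤ × ℤ → Fin A.length) (b : ℤ × ℤ → Fin B.length), ∀ x y : ℤ,
    (A.get (a (x, y))).2.1 = (B.get (b (x, y))).2.2.1 ∧
    (A.get (a (x, y))).2.2.2 = (B.get (b (x, y - 1))).1 ∧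
    (B.get (b (x, y))).2.1 = (A.get (a (x + 1, y + 1))).2.2.1 ∧
    (B.get (b (x, y))).2.2.2 = (A.get (a (x + 1, y))).1

/-!
Turning the plane by 45°, the `A` positions `(2x, 2y)` and the `B` positions `(2x+1, 2y+1)`
become the two colour classes `(x + y, y - x)` and `(x + y + 1, y - x)` of a checkerboard on
`ℤ²`, and the four long edges of a tile become its four Wang edges. So a Wang tile
`(l, r, t, b)` read as the AB tile `(ul, ur, ll, lr) = (t, r, l, b)` makes a tile set `L`
Wang-solvable iff `(L', L')` is AB-solvable, `L'` being the image of `L`; a decision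
procedure for AB tilings would thus decide Wang tilings.
-/

def abOfWang : Tile → Tile := fun t => (t.2.2.1, t.2.1, t.1, t.2.2.2)

theorem primrec_abOfWang : Primrec abOfWang :=
  (Primrec.fst.comp (Primrec.snd.comp Primrec.snd)).pair
    ((Primrec.fst.comp Primrec.snd).pair
      (Primrec.fst.pair (Primrec.snd.comp (Primrec.snd.comp Primrec.snd))))

theorem primrec_map_abOfWang : Primrec fun L : List Tile => L.map abOfWang :=
  Primrec.list_map Primrec.id (primrec_abOfWang.comp Primrec.snd).to₂

section Checkerboard

variable {α : Type*}

def checkerboard (a b : ℤ × ℤ → α) (p : ℤ × ℤ) : α :=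
  if Even (p.1 + p.2) then a ((p.1 - p.2) / 2, (p.1 + p.2) / 2)
  else b ((p.1 - p.2 - 1) / 2, (p.1 + p.2 - 1) / 2)

theorem checkerboard_even (a b : ℤ × ℤ → α) (x y : ℤ) :
    checkerboard a b (x + y, y - x) = a (x, y) := by
  have hx : (x + y - (y - x)) / 2 = x := by omega
  simp [checkerboard, hx, show x + y + (y - x) = 2 * y by ring]

theorem checkerboard_odd (a b : ℤ × ℤ → α) (x y : ℤ) :
    checkerboard a b (x + y + 1, y - x) = b (x, y) := by
  have hx : (x + y + 1 - (y - x) - 1) / 2 = x := by omega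
  simp [checkerboard, hx, show x + y + 1 + (y - x) = 2 * y + 1 by ring]

end Checkerboard

theorem exists_diag_coords (i j : ℤ) :
    ∃ x y : ℤ, (i = x + y ∧ j = y - x) ∨ (i = x + y + 1 ∧ j = y - x) := by
  rcases Int.even_or_odd (i + j) with ⟨m, hm⟩ | ⟨m, hm⟩
  · exact ⟨m - j, m, Or.inl (by omega)⟩
  · exact ⟨m - j, m, Or.inr (by omega)⟩

theorem WangSolvable.abSolvable_map {L : List Tile} (h : WangSolvable L) :
    ABSolvable (L.map abOfWang) (L.map abOfWang) := by
  obtain ⟨f, hf⟩ := h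
  have hlen : (L.map abOfWang).length = L.length := L.length_map _
  refine ⟨fun p => Fin.cast hlen.symm (f (p.1 + p.2, p.2 - p.1)),
    fun p => Fin.cast hlen.symm (f (p.1 + p.2 + 1, p.2 - p.1)), fun x y => ?_⟩
  simp only [List.get_eq_getElem, List.getElem_map, Fin.val_cast, abOfWang] at hf ⊢
  refine ⟨(hf (x + y) (y - x)).1, ?_, ?_, ?_⟩
  · convert ((hf (x + y) (y - x - 1)).2).symm using 5 <;> ring_nf
  · convert (hf (x + y + 1) (y - x)).1 using 5
    ring_nf
  · convert ((hf (x + y + 1) (y - x - 1)).2).symm using 5 <;> ring_nf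

theorem WangSolvable.of_abSolvable_map {L : List Tile}
    (h : ABSolvable (L.map abOfWang) (L.map abOfWang)) : WangSolvable L := by
  obtain ⟨a, b, hab⟩ := h
  have hlen : (L.map abOfWang).length = L.length := L.length_map _
  refine ⟨checkerboard (Fin.cast hlen ∘ a) (Fin.cast hlen ∘ b), fun i j => ?_⟩
  simp only [List.get_eq_getElem, List.getElem_map, abOfWang] at hab ⊢
  obtain ⟨x, y, ⟨rfl, rfl⟩ | ⟨rfl, rfl⟩⟩ := exists_diag_coords i j
  · rw [show (x + y, y - x + 1) = (x - 1 + y + 1, y - (x - 1)) by ext <;> ring]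
    simp only [checkerboard_even, checkerboard_odd, Function.comp_apply, Fin.val_cast]
    refine ⟨(hab x y).1, ?_⟩
    simpa using ((hab (x - 1) y).2.2.2).symm
  · rw [show (x + y + 1 + 1, y - x) = ((x + 1) + (y + 1), (y + 1) - (x + 1)) by ext <;> ring,
      show (x + y + 1, y - x + 1) = (x + (y + 1), (y + 1) - x) by ext <;> ring]
    simp only [checkerboard_even, checkerboard_odd, Function.comp_apply, Fin.val_cast]
    refine ⟨(hab x y).2.2.1, ?_⟩
    simpa using ((hab x (y + 1)).2.1).symm

/-- The AB tiling problem is undecidable: assuming Berger's theorem (no algorithm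
decides whether a finite set of Wang tiles tiles the plane), there is no computable
function that, given finite lists `A` and `B` of colored `1×2` tiles with
`|A| = |B|`, decides whether they admit an AB tiling of the plane. -/
theorem ab_tiling_undecidable
    (hWang : ¬ ∃ f : List Tile → Bool, Computable f ∧
        ∀ L, f L = true ↔ WangSolvable L) :
    ¬ ∃ g : List Tile × List Tile → Bool, Computable g ∧
        ∀ A B, A.length = B.length → (g (A, B) = true ↔ ABSolvable A B) := by
  rintro ⟨g, hg_comp, hg⟩
  refine hWang ⟨fun L => g (L.map abOfWang, L.map abOfWang),
    hg_comp.comp (primrec_map_abOfWang.pair primrec_map_abOfWang).to_comp, fun L => ?_⟩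
  rw [hg _ _ rfl]
  exact ⟨WangSolvable.of_abSolvable_map, WangSolvable.abSolvable_map⟩
end

section
/- Let n ≥ 1 and consider edges labeled 1,…,4n+2, each with 8n+4 spots. Edge i has a bump in spot i, a bump in spot 8n+4−j+1 for each j with (i,j) a forbidden pair, and dents elsewhere among spots 1,…,4n+2 and the forbidden-pair spots. When edge i is placed against edge j (so spot p of one edge meets spot 8n+4−p+1 of the other), two bumps coincide at some spot if and only if (i,j) or (j,i) is a forbidden pair. -/
/-!
With `m = 4n+2`, among spots `1, …, m` edge `i` has a single bump, at `i`; the spot facing the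
low spot `q ≤ m` is `2m - q + 1`, which carries a bump on edge `i` exactly when
`F i q`. Every collision therefore pairs the low bump of one edge with a high
bump of the other: a collision of `i` against `j` at a low spot is `F j i`, at a
high spot it is `F i j`.
-/

section BumpPattern

def IsBumpPattern (m : ℕ) (F : ℕ → ℕ → Prop) (b : ℕ → ℕ → Bool) : Prop :=
  ∀ i p, 1 ≤ i → i ≤ m → 1 ≤ p → p ≤ 2 * m →
    (b i p = true ↔ (p ≤ m ∧ p = i) ∨ (m < p ∧ ∃ j, F i j ∧ p = 2 * m - j + 1))

variable {m : ℕ} {F : ℕ → ℕ → Prop} {b : ℕ → ℕ → Bool}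

theorem IsBumpPattern.bump_low_iff (hb : IsBumpPattern m F b) {i p : ℕ}
    (hi1 : 1 ≤ i) (hi2 : i ≤ m) (hp1 : 1 ≤ p) (hp2 : p ≤ m) :
    b i p = true ↔ p = i := by
  rw [hb i p hi1 hi2 hp1 (by omega)]
  omega

theorem IsBumpPattern.bump_high_iff (hb : IsBumpPattern m F b) {i q : ℕ}
    (hi1 : 1 ≤ i) (hi2 : i ≤ m) (hq1 : 1 ≤ q) (hq2 : q ≤ m) :
    b i (2 * m - q + 1) = true ↔ F i q := by
  rw [hb i _ hi1 hi2 (by omega) (by omega)]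
  constructor
  · rintro (⟨_, _⟩ | ⟨_, j, hij, hjq⟩)
    · omega
    · obtain rfl : j = q := by omega
      exact hij
  · exact fun hiq => Or.inr ⟨by omega, q, hiq, rfl⟩

theorem IsBumpPattern.collision_low_iff (hb : IsBumpPattern m F b) {i j p : ℕ}
    (hi1 : 1 ≤ i) (hi2 : i ≤ m) (hj1 : 1 ≤ j) (hj2 : j ≤ m) (hp1 : 1 ≤ p) (hp2 : p ≤ m) :
    (b i p = true ∧ b j (2 * m - p + 1) = true) ↔ p = i ∧ F j i := by
  rw [hb.bump_low_iff hi1 hi2 hp1 hp2, hb.bump_high_iff hj1 hj2 hp1 hp2]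
  constructor <;> rintro ⟨rfl, hji⟩ <;> exact ⟨rfl, hji⟩

theorem IsBumpPattern.collision_high_iff (hb : IsBumpPattern m F b) {i j q : ℕ}
    (hi1 : 1 ≤ i) (hi2 : i ≤ m) (hj1 : 1 ≤ j) (hj2 : j ≤ m) (hq1 : 1 ≤ q) (hq2 : q ≤ m) :
    (b i (2 * m - q + 1) = true ∧ b j (2 * m - (2 * m - q + 1) + 1) = true) ↔
      q = j ∧ F i j := by
  have hmirror : 2 * m - (2 * m - q + 1) + 1 = q := by omega
  rw [hmirror, hb.bump_high_iff hi1 hi2 hq1 hq2, hb.bump_low_iff hj1 hj2 hq1 hq2]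
  constructor
  · rintro ⟨hiq, rfl⟩
    exact ⟨rfl, hiq⟩
  · rintro ⟨rfl, hij⟩
    exact ⟨hij, rfl⟩

theorem IsBumpPattern.exists_collision_iff (hb : IsBumpPattern m F b) {i j : ℕ}
    (hi1 : 1 ≤ i) (hi2 : i ≤ m) (hj1 : 1 ≤ j) (hj2 : j ≤ m) :
    (∃ p, 1 ≤ p ∧ p ≤ 2 * m ∧ b i p = true ∧ b j (2 * m - p + 1) = true) ↔
      F i j ∨ F j i := by
  constructor
  · rintro ⟨p, hp1, hp2, hcollide⟩
    rcases le_or_gt p m with hpm | hpm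
    · exact Or.inr ((hb.collision_low_iff hi1 hi2 hj1 hj2 hp1 hpm).mp hcollide).2
    · obtain ⟨q, hq1, hqm, rfl⟩ : ∃ q, 1 ≤ q ∧ q ≤ m ∧ p = 2 * m - q + 1 :=
        ⟨2 * m - p + 1, by omega, by omega, by omega⟩
      exact Or.inl ((hb.collision_high_iff hi1 hi2 hj1 hj2 hq1 hqm).mp hcollide).2
  · rintro (hij | hji)
    · exact ⟨2 * m - j + 1, by omega, by omega,
        (hb.collision_high_iff hi1 hi2 hj1 hj2 hj1 hj2).mpr ⟨rfl, hij⟩⟩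
    · exact ⟨i, hi1, by omega, (hb.collision_low_iff hi1 hi2 hj1 hj2 hi1 hi2).mpr ⟨rfl, hji⟩⟩

end BumpPattern

theorem bump_collision_iff_forbidden_general (n : ℕ)
    (F : ℕ → ℕ → Prop)
    (b : ℕ → ℕ → Bool)
    (hb : ∀ i p, 1 ≤ i → i ≤ 4*n+2 → 1 ≤ p → p ≤ 8*n+4 →
      (b i p = true ↔ (p ≤ 4*n+2 ∧ p = i) ∨
        (4*n+2 < p ∧ ∃ j, F i j ∧ p = 8*n+4 - j + 1)))
    (i j : ℕ) (hi1 : 1 ≤ i) (hi2 : i ≤ 4*n+2) (hj1 : 1 ≤ j) (hj2 : j ≤ 4*n+2) :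
    (∃ p, 1 ≤ p ∧ p ≤ 8*n+4 ∧ b i p = true ∧ b j (8*n+4 - p + 1) = true) ↔
      (F i j ∨ F j i) := by
  have hlen : 8 * n + 4 = 2 * (4 * n + 2) := by ring
  rw [hlen] at hb ⊢
  exact IsBumpPattern.exists_collision_iff hb hi1 hi2 hj1 hj2

/-- The bump/dent encoding of forbidden pairs. Edges are labeled `1,…,4n+2`, each
with `8n+4` spots; `F` is the symmetric forbidden-pair relation; `b i p = true`
means edge `i` has a bump in spot `p` (and `b i p = false` means a dent). Edge `i`
has a bump exactly in spot `i` among spots `1,…,4n+2`, and in spot `8n+4−j+1` for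
each `j` with `(i,j)` forbidden. When edge `i` is placed against edge `j` (spot `p`
of one meets spot `8n+4−p+1` of the other), two bumps coincide at some spot if and
only if `(i,j)` or `(j,i)` is a forbidden pair. -/
theorem bump_collision_iff_forbidden (n : ℕ) (hn : 1 ≤ n)
    (F : ℕ → ℕ → Prop) (hFsymm : ∀ i j, F i j → F j i)
    (hFrange : ∀ i j, F i j → 1 ≤ i ∧ i ≤ 4*n+2 ∧ 1 ≤ j ∧ j ≤ 4*n+2)
    (b : ℕ → ℕ → Bool)
    (hb : ∀ i p, 1 ≤ i → i ≤ 4*n+2 → 1 ≤ p → p ≤ 8*n+4 →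
      (b i p = true ↔ (p ≤ 4*n+2 ∧ p = i) ∨
        (4*n+2 < p ∧ ∃ j, F i j ∧ p = 8*n+4 - j + 1)))
    (i j : ℕ) (hi1 : 1 ≤ i) (hi2 : i ≤ 4*n+2) (hj1 : 1 ≤ j) (hj2 : j ≤ 4*n+2) :
    (∃ p, 1 ≤ p ∧ p ≤ 8*n+4 ∧ b i p = true ∧ b j (8*n+4 - p + 1) = true) ↔
      (F i j ∨ F j i) :=
  bump_collision_iff_forbidden_general n F b hb i j hi1 hi2 hj1 hj2
end
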